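/- arXiv:0705.4309 — 2 statements merged into one kernel-verified Lean document; each statement's English description precedes it below -/
import Mathlib

section
/- Fix d,r,t∈ℕ and p∈[1,∞]. Let μ⃗=(μ^1,…,μ^t) be a vector of finite complex Borel measures on ℝ^d, let Φ=(φ^1,…,φ^r) with each φ^i∈W₀^1 satisfy the Riesz condition for p, and let X={x_j : j∈J} be a separated μ⃗-sampling set for V^p(Φ). Then there exists ε₀>0 such that for every Θ=(θ^1,…,θ^r) with each θ^i∈W₀^1 and ‖Φ−Θ‖_{(W^1)^{(r)}}<ε₀, Θ satisfies the Riesz condition for p and X is a μ⃗-sampling set for V^p(Θ); that is, there exist 0<A'_p≤B'_p<∞ with A'_p‖g‖_{L^p} ≤ ∑_{l=1}^t ‖((g∗μ^l)(x_j))_{j∈J}‖_{ℓ^p(J)} ≤ B'_p‖g‖_{L^p} for all g∈V^p(Θ). -/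
open MeasureTheory ENNReal

noncomputable section

abbrev Euc (d : ℕ) := EuclideanSpace ℝ (Fin d)

/-- Embedding of `ℤ^d` into `ℝ^d`. -/
def zemb {d : ℕ} (k : Fin d → ℤ) : Euc d := WithLp.toLp 2 (fun i => (k i : ℝ))

/-- `ess sup_{x ∈ [0,1]^d} |f(x+k)|`, valued in `ℝ≥0∞`. -/
def cubeSup {d : ℕ} (f : Euc d → ℂ) (k : Fin d → ℤ) : ℝ≥0∞ :=
  essSup (fun x => (‖f (x + zemb k)‖₊ : ℝ≥0∞))
    (volume.restrict {x : Euc d | ∀ i, x i ∈ Set.Icc (0:ℝ) 1})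

/-- The Wiener amalgam norm `‖f‖_{W^p}`. -/
def WNorm {d : ℕ} (p : ℝ≥0∞) (f : Euc d → ℂ) : ℝ≥0∞ :=
  if p = ∞ then ⨆ k : Fin d → ℤ, cubeSup f k
  else (∑' k : Fin d → ℤ, cubeSup f k ^ p.toReal) ^ (1 / p.toReal)

/-- Membership in `W₀^1`: continuous with finite `W^1` norm. -/
def MemW01 {d : ℕ} (f : Euc d → ℂ) : Prop := Continuous f ∧ WNorm 1 f < ∞

/-- `(W^1)^{(r)}` norm of a vector of functions. -/
def WNormVec {d r : ℕ} (Φ : Fin r → Euc d → ℂ) : ℝ≥0∞ := ∑ i, WNorm 1 (Φ i)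

/-- the `ℓ^p` norm of a family of complex numbers, valued in `ℝ≥0∞`. -/
def lpNorm {ι : Type*} (p : ℝ≥0∞) (c : ι → ℂ) : ℝ≥0∞ :=
  if p = ∞ then ⨆ j, (‖c j‖₊ : ℝ≥0∞)
  else (∑' j, (‖c j‖₊ : ℝ≥0∞) ^ p.toReal) ^ (1 / p.toReal)

/-- The `(ℓ^p(ℤ^d))^{(r)}` norm `‖C‖ = ∑_i ‖c^i‖_{ℓ^p}`. -/
def vlpNorm {d r : ℕ} (p : ℝ≥0∞) (C : Fin r → (Fin d → ℤ) → ℂ) : ℝ≥0∞ :=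
  ∑ i, lpNorm p (C i)

/-- `f_C = ∑_{k ∈ ℤ^d} ∑_i c^i(k) φ^i(· - k)`. -/
def genFun {d r : ℕ} (Φ : Fin r → Euc d → ℂ) (C : Fin r → (Fin d → ℤ) → ℂ)
    (x : Euc d) : ℂ :=
  ∑' k : Fin d → ℤ, ∑ i, C i k * Φ i (x - zemb k)

/-- Integral of a complex-valued function against a finite complex Borel measure,
via the Jordan decompositions of the real and imaginary parts. -/
def cInt {d : ℕ} (μ : ComplexMeasure (Euc d)) (f : Euc d → ℂ) : ℂ :=
  ((∫ x, f x ∂(ComplexMeasure.re μ).toJordanDecomposition.posPart) -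
    (∫ x, f x ∂(ComplexMeasure.re μ).toJordanDecomposition.negPart)) +
  Complex.I * ((∫ x, f x ∂(ComplexMeasure.im μ).toJordanDecomposition.posPart) -
    (∫ x, f x ∂(ComplexMeasure.im μ).toJordanDecomposition.negPart))

/-- The convolution `(φ ∗ μ)(x) = ∫ φ(x - y) dμ(y)`. -/
def mconv {d : ℕ} (μ : ComplexMeasure (Euc d)) (φ : Euc d → ℂ) (x : Euc d) : ℂ :=
  cInt μ (fun y => φ (x - y))

/-- The total variation norm `|μ|(ℝ^d)` of a finite complex Borel measure, as the
supremum of `∑ ‖μ(S_i)‖` over finite disjoint families of measurable sets. -/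
def cmNorm {d : ℕ} (μ : ComplexMeasure (Euc d)) : ℝ≥0∞ :=
  ⨆ (n : ℕ) (S : Fin n → Set (Euc d)) (_ : ∀ i, MeasurableSet (S i))
    (_ : Pairwise (Function.onFun Disjoint S)), ∑ i, (‖μ (S i)‖₊ : ℝ≥0∞)

/-- norm of a vector of complex measures. -/
def cmNormVec {d t : ℕ} (μ : Fin t → ComplexMeasure (Euc d)) : ℝ≥0∞ :=
  ∑ l, cmNorm (μ l)

/-- The Riesz condition with explicit constants. -/
def RieszWith {d r : ℕ} (p : ℝ≥0∞) (Φ : Fin r → Euc d → ℂ) (m M : ℝ) : Prop :=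
  0 < m ∧ m ≤ M ∧ ∀ C : Fin r → (Fin d → ℤ) → ℂ, vlpNorm p C < ∞ →
    ENNReal.ofReal m * vlpNorm p C ≤ eLpNorm (genFun Φ C) p volume ∧
    eLpNorm (genFun Φ C) p volume ≤ ENNReal.ofReal M * vlpNorm p C

/-- The Riesz (unconditional basis) condition for `p`. -/
def RieszCond {d r : ℕ} (p : ℝ≥0∞) (Φ : Fin r → Euc d → ℂ) : Prop :=
  ∃ m M : ℝ, RieszWith p Φ m M

/-- `X` is a `μ⃗`-sampling set for `V^p(Φ)`. -/
def SamplingSet {d r t : ℕ} {J : Type*} (p : ℝ≥0∞) (Φ : Fin r → Euc d → ℂ)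
    (μ : Fin t → ComplexMeasure (Euc d)) (X : J → Euc d) : Prop :=
  ∃ A B : ℝ, 0 < A ∧ A ≤ B ∧ ∀ C : Fin r → (Fin d → ℤ) → ℂ, vlpNorm p C < ∞ →
    ENNReal.ofReal A * eLpNorm (genFun Φ C) p volume ≤
      ∑ l, lpNorm p (fun j => mconv (μ l) (genFun Φ C) (X j)) ∧
    ∑ l, lpNorm p (fun j => mconv (μ l) (genFun Φ C) (X j)) ≤
      ENNReal.ofReal B * eLpNorm (genFun Φ C) p volume

/-- `X` is separated with constant `δ`. -/
def SeparatedWith {d : ℕ} {J : Type*} (X : J → Euc d) (δ : ℝ) : Prop :=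
  ∀ i j : J, i ≠ j → δ ≤ dist (X i) (X j)

def SeparatedSet {d : ℕ} {J : Type*} (X : J → Euc d) : Prop :=
  ∃ δ : ℝ, 0 < δ ∧ SeparatedWith X δ

/-- Membership in `M_s(ℝ^d)`: `∫ (1+|x|)^s d|μ| < ∞`, expressed via the Jordan
decompositions of the real and imaginary parts. -/
def MemMs {d : ℕ} (s : ℝ) (μ : ComplexMeasure (Euc d)) : Prop :=
  (∫⁻ x, ENNReal.ofReal ((1 + ‖x‖) ^ s) ∂(ComplexMeasure.re μ).toJordanDecomposition.posPart < ∞) ∧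
  (∫⁻ x, ENNReal.ofReal ((1 + ‖x‖) ^ s) ∂(ComplexMeasure.re μ).toJordanDecomposition.negPart < ∞) ∧
  (∫⁻ x, ENNReal.ofReal ((1 + ‖x‖) ^ s) ∂(ComplexMeasure.im μ).toJordanDecomposition.posPart < ∞) ∧
  (∫⁻ x, ENNReal.ofReal ((1 + ‖x‖) ^ s) ∂(ComplexMeasure.im μ).toJordanDecomposition.negPart < ∞)

/-- `Φ ∈ W_s`: an `s`-localized Riesz generator. -/
def MemWs {d r : ℕ} (s : ℝ) (Φ : Fin r → Euc d → ℂ) : Prop :=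
  (∀ i, MemW01 (Φ i)) ∧ RieszCond 2 Φ ∧
    ∀ i, ∃ C0 : ℝ, 0 < C0 ∧ ∀ x : Euc d, ‖Φ i x‖ ≤ C0 * (1 + ‖x‖) ^ (-s)

end

/-!
The generators enter `f_C = ∑ₖ ∑ᵢ cⁱ(k) φⁱ(· - k)` linearly, so `f_C^Φ = f_C^Θ + f_C^{Φ-Θ}`, and
the perturbation term is controlled by two a priori bounds valid for any generator vector `Ψ`:
`‖f_C^Ψ‖_{L^p} ≤ ‖Ψ‖_{W^1} ‖C‖` and `∑ₗ ‖((f_C^Ψ ∗ μˡ)(xⱼ))ⱼ‖_{ℓ^p} ≤ K ‖Ψ‖_{W^1} ‖C‖`, where `K`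
depends only on `d`, the separation of `X` and the measures. Both follow from the majorant
`|f_C^Ψ(x)| ≤ ∑ᵢ ∑ₖ sup_{[0,1]^d} |ψⁱ(· + k)| |cⁱ(⌊x⌋ - k)|`, a discrete convolution of an `ℓ^1`
sequence with an `ℓ^p` sequence (Young's inequality), together with the fact that a separated set
has boundedly many points in each unit cube.

With `ε = ‖Φ - Θ‖_{W^1}`, the Riesz and sampling bounds of `Φ` therefore pass to `Θ` up to errors
`O(ε ‖C‖)`; the lower Riesz bound `‖C‖ ≤ (2/m) ‖f_C^Θ‖_{L^p}` turns these into errors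
`O(ε ‖f_C^Θ‖_{L^p})`, which are absorbed once `ε` is small.
-/

open Filter

noncomputable section

theorem ENNReal.rpow_iSup {σ : Type*} (F : σ → ℝ≥0∞) {q : ℝ} (hq : 0 < q) :
    (⨆ s, F s) ^ q = ⨆ s, F s ^ q :=
  (ENNReal.orderIsoRpow q hq).map_iSup F

section SequenceNorm
variable {ι κ : Type*} {p : ℝ≥0∞}

def elpNorm (p : ℝ≥0∞) (F : ι → ℝ≥0∞) : ℝ≥0∞ :=
  if p = ∞ then ⨆ j, F j else (∑' j, F j ^ p.toReal) ^ (1 / p.toReal)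

theorem lpNorm_eq_elpNorm (p : ℝ≥0∞) (c : ι → ℂ) : lpNorm p c = elpNorm p fun j => ‖c j‖ₑ :=
  rfl

theorem ENNReal.one_le_toReal_of_one_le (hp : 1 ≤ p) (hp' : p ≠ ∞) : 1 ≤ p.toReal := by
  simpa using ENNReal.toReal_mono hp' hp

theorem elpNorm_mono {F G : ι → ℝ≥0∞} (h : ∀ j, F j ≤ G j) : elpNorm p F ≤ elpNorm p G := by
  unfold elpNorm
  split_ifs
  · exact iSup_mono h
  · gcongr with j
    exact h j

theorem le_elpNorm (hp : p ≠ 0) (F : ι → ℝ≥0∞) (j : ι) : F j ≤ elpNorm p F := by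
  unfold elpNorm
  split_ifs with hp'
  · exact le_iSup F j
  · have hq : p.toReal ≠ 0 := (ENNReal.toReal_pos hp hp').ne'
    calc F j = (F j ^ p.toReal) ^ (1 / p.toReal) := by
          rw [← ENNReal.rpow_mul, mul_one_div_cancel hq, ENNReal.rpow_one]
      _ ≤ _ := by gcongr; exact ENNReal.le_tsum j

theorem elpNorm_const_mul (hp : p ≠ 0) (c : ℝ≥0∞) (F : ι → ℝ≥0∞) :
    elpNorm p (fun j => c * F j) = c * elpNorm p F := by
  unfold elpNorm
  split_ifs with hp'
  · exact (ENNReal.mul_iSup _ _).symm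
  · have hq : 0 < p.toReal := ENNReal.toReal_pos hp hp'
    simp_rw [ENNReal.mul_rpow_of_nonneg _ _ hq.le, ENNReal.tsum_mul_left]
    rw [ENNReal.mul_rpow_of_nonneg _ _ (by positivity), ← ENNReal.rpow_mul,
      mul_one_div_cancel hq.ne', ENNReal.rpow_one]

theorem elpNorm_comp_equiv (e : κ ≃ ι) (F : ι → ℝ≥0∞) :
    elpNorm p (fun j => F (e j)) = elpNorm p F := by
  unfold elpNorm
  split_ifs
  · exact e.iSup_comp (g := F)
  · rw [e.tsum_eq (fun i => F i ^ p.toReal)]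

theorem elpNorm_add_le (hp : 1 ≤ p) (F G : ι → ℝ≥0∞) :
    elpNorm p (fun j => F j + G j) ≤ elpNorm p F + elpNorm p G := by
  unfold elpNorm
  split_ifs with hp'
  · exact iSup_le fun j => add_le_add (le_iSup F j) (le_iSup G j)
  · have hq := ENNReal.one_le_toReal_of_one_le hp hp'
    have hq0 : 0 < 1 / p.toReal := by positivity
    rw [ENNReal.tsum_eq_iSup_sum, ENNReal.rpow_iSup _ hq0]
    refine iSup_le fun s => (ENNReal.Lp_add_le s F G hq).trans ?_
    gcongr <;> exact ENNReal.sum_le_tsum s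

theorem elpNorm_finset_sum_le (hp : 1 ≤ p) (s : Finset κ) (f : κ → ι → ℝ≥0∞) :
    elpNorm p (fun n => ∑ i ∈ s, f i n) ≤ ∑ i ∈ s, elpNorm p (f i) := by
  classical
  induction s using Finset.induction_on with
  | empty =>
    -- `elpNorm p 0 = 0` is the case `c = 0` of `elpNorm_const_mul`
    simpa using elpNorm_const_mul (p := p) (by positivity) 0 (fun _ : ι => 0)
  | insert a s ha ih =>
    simp only [Finset.sum_insert ha]
    exact (elpNorm_add_le hp _ _).trans (by gcongr)

theorem elpNorm_iSup_of_monotone {σ : Type*} [Preorder σ] [IsDirectedOrder σ] [Nonempty σ]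
    {F : σ → ι → ℝ≥0∞} (hF : Monotone F) :
    elpNorm p (fun n => ⨆ s, F s n) = ⨆ s, elpNorm p (F s) := by
  unfold elpNorm
  split_ifs with hp'
  · exact iSup_comm
  · by_cases hp0 : p = 0
    · simp [hp0]
    have hq : 0 < p.toReal := ENNReal.toReal_pos hp0 hp'
    simp_rw [ENNReal.rpow_iSup _ hq, ENNReal.tsum_eq_iSup_sum]
    rw [← ENNReal.rpow_iSup _ (by positivity)]
    congr 1
    simp_rw [ENNReal.finsetSum_iSup_of_monotone fun n s t hst =>
      ENNReal.rpow_le_rpow (hF hst n) hq.le]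
    exact iSup_comm

theorem elpNorm_tsum_le (hp : 1 ≤ p) (f : κ → ι → ℝ≥0∞) :
    elpNorm p (fun n => ∑' i, f i n) ≤ ∑' i, elpNorm p (f i) := by
  simp_rw [ENNReal.tsum_eq_iSup_sum]
  rw [elpNorm_iSup_of_monotone fun s t hst n => Finset.sum_le_sum_of_subset hst]
  exact iSup_le fun s => (elpNorm_finset_sum_le hp s f).trans
    (le_iSup (fun t => ∑ i ∈ t, elpNorm p (f i)) s)

theorem elpNorm_conv_le [AddGroup ι] (hp : 1 ≤ p) (w F : ι → ℝ≥0∞) :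
    elpNorm p (fun n => ∑' k, w k * F (n - k)) ≤ (∑' k, w k) * elpNorm p F :=
  calc elpNorm p (fun n => ∑' k, w k * F (n - k))
      ≤ ∑' k, elpNorm p (fun n => w k * F (n - k)) := elpNorm_tsum_le hp _
    _ = ∑' k, w k * elpNorm p F := tsum_congr fun k => by
      rw [elpNorm_const_mul (by positivity), ← elpNorm_comp_equiv (Equiv.subRight k) F]; rfl
    _ = (∑' k, w k) * elpNorm p F := ENNReal.tsum_mul_right

theorem elpNorm_comp_le_of_tsum_comp_le {g : κ → ι} {K : ℝ≥0∞} (hp : 1 ≤ p) (hK : 1 ≤ K)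
    (h : ∀ G : ι → ℝ≥0∞, ∑' j, G (g j) ≤ K * ∑' n, G n) (F : ι → ℝ≥0∞) :
    elpNorm p (fun j => F (g j)) ≤ K * elpNorm p F := by
  unfold elpNorm
  split_ifs with hp'
  · exact iSup_le fun j => (le_iSup F (g j)).trans (le_mul_of_one_le_left' hK)
  · have hq := ENNReal.one_le_toReal_of_one_le hp hp'
    calc (∑' j, F (g j) ^ p.toReal) ^ (1 / p.toReal)
        ≤ (K * ∑' n, F n ^ p.toReal) ^ (1 / p.toReal) := by gcongr; exact h _
      _ = K ^ (1 / p.toReal) * (∑' n, F n ^ p.toReal) ^ (1 / p.toReal) :=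
        ENNReal.mul_rpow_of_nonneg _ _ (by positivity)
      _ ≤ K * (∑' n, F n ^ p.toReal) ^ (1 / p.toReal) := by
        gcongr
        calc K ^ (1 / p.toReal) ≤ K ^ (1 : ℝ) :=
              ENNReal.rpow_le_rpow_of_exponent_le hK (by rw [div_le_one (by positivity)]; exact hq)
          _ = K := ENNReal.rpow_one K

end SequenceNorm

section Cubes
variable {d : ℕ}

theorem zemb_apply (k : Fin d → ℤ) (i : Fin d) : zemb k i = k i := rfl

theorem zemb_sub (k l : Fin d → ℤ) : zemb (k - l) = zemb k - zemb l := by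
  ext i
  simp [zemb_apply]

def cubeIndex (x : Euc d) : Fin d → ℤ := fun i => ⌊x i⌋

def cube (n : Fin d → ℤ) : Set (Euc d) := cubeIndex ⁻¹' {n}

theorem measurable_cubeIndex : Measurable (cubeIndex (d := d)) :=
  measurable_pi_lambda _ fun i => Int.measurable_floor.comp (by fun_prop)

theorem measurableSet_cube (n : Fin d → ℤ) : MeasurableSet (cube n) :=
  measurable_cubeIndex (measurableSet_singleton n)

theorem lintegral_eq_tsum_cube (ν : Measure (Euc d)) (f : Euc d → ℝ≥0∞) :
    ∫⁻ x, f x ∂ν = ∑' n, ∫⁻ x in cube n, f x ∂ν := by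
  have hdisj : Pairwise (Function.onFun Disjoint (cube (d := d))) := fun n m hnm =>
    (Set.disjoint_singleton.2 hnm).preimage _
  have hunion : ⋃ n, cube (d := d) n = Set.univ := by
    ext x
    simp [cube]
  rw [← lintegral_iUnion measurableSet_cube hdisj, hunion, Measure.restrict_univ]

theorem tsum_measure_cube (ν : Measure (Euc d)) : ∑' n, ν (cube n) = ν Set.univ := by
  simpa using (lintegral_eq_tsum_cube ν 1).symm

theorem volume_cube (n : Fin d → ℤ) : volume (cube n) = 1 := by
  have hcube : cube n = WithLp.ofLp ⁻¹' Set.univ.pi fun i => Set.Ico (n i : ℝ) (n i + 1) := by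
    ext x
    simp [cube, cubeIndex, funext_iff, Int.floor_eq_iff]
  rw [hcube, (PiLp.volume_preserving_ofLp (Fin d)).measure_preimage
    (MeasurableSet.univ_pi fun _ => measurableSet_Ico).nullMeasurableSet, volume_pi_pi]
  simp

end Cubes

section PointwiseBound
variable {d : ℕ}

theorem unitCube_subset_closure_interior :
    {x : Euc d | ∀ i, x i ∈ Set.Icc (0:ℝ) 1} ⊆
      closure (interior {x : Euc d | ∀ i, x i ∈ Set.Icc (0:ℝ) 1}) := by
  let e : Euc d ≃ₜ (Fin d → ℝ) := (EuclideanSpace.equiv (Fin d) ℝ).toHomeomorph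
  have hQ : {x : Euc d | ∀ i, x i ∈ Set.Icc (0:ℝ) 1} = e ⁻¹' Set.univ.pi fun _ => Set.Icc 0 1 := by
    ext x
    simp only [Set.mem_preimage, Set.mem_univ_pi]
    rfl
  rw [hQ, ← e.preimage_interior, ← e.preimage_closure, interior_pi_set Set.finite_univ,
    closure_pi_set]
  simp only [interior_Icc, closure_Ioo zero_ne_one, subset_refl]

theorem enorm_le_cubeSup {ψ : Euc d → ℂ} (hψ : Continuous ψ) (k : Fin d → ℤ) {y : Euc d}
    (hy : ∀ i, y i ∈ Set.Icc (0:ℝ) 1) : ‖ψ (y + zemb k)‖ₑ ≤ cubeSup ψ k := by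
  have hae : ∀ᵐ z ∂volume.restrict {x : Euc d | ∀ i, x i ∈ Set.Icc (0:ℝ) 1},
      ‖ψ (z + zemb k)‖ₑ ≤ cubeSup ψ k := ae_le_essSup
  -- `eqOn_of_ae_eq` upgrades a.e. equalities of continuous functions, so encode `≤` as
  -- `max a b = b`
  have heq : (fun z => max ‖ψ (z + zemb k)‖ₑ (cubeSup ψ k))
      =ᵐ[volume.restrict {x : Euc d | ∀ i, x i ∈ Set.Icc (0:ℝ) 1}] fun _ => cubeSup ψ k :=
    hae.mono fun z hz => max_eq_right hz
  have hcont : Continuous fun z => max ‖ψ (z + zemb k)‖ₑ (cubeSup ψ k) := by fun_prop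
  exact max_eq_right_iff.mp (Measure.eqOn_of_ae_eq heq hcont.continuousOn continuousOn_const
    unitCube_subset_closure_interior hy)

theorem enorm_le_cubeSup_cubeIndex {ψ : Euc d → ℂ} (hψ : Continuous ψ) (x : Euc d)
    (k : Fin d → ℤ) : ‖ψ (x - zemb k)‖ₑ ≤ cubeSup ψ (cubeIndex x - k) := by
  have hx : x - zemb k = (x - zemb (cubeIndex x)) + zemb (cubeIndex x - k) := by
    rw [zemb_sub]; abel
  rw [hx]
  refine enorm_le_cubeSup hψ _ fun i => ?_
  simpa [zemb_apply, cubeIndex] using (Int.fract_lt_one (x i)).le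

end PointwiseBound

section GeneratorFunctions
variable {d r : ℕ} {p : ℝ≥0∞} {Ψ : Fin r → Euc d → ℂ} {C : Fin r → (Fin d → ℤ) → ℂ}

theorem WNorm_one (ψ : Euc d → ℂ) : WNorm 1 ψ = ∑' k, cubeSup ψ k := by
  simp [WNorm]

theorem eLpNorm_le_elpNorm_of_enorm_le {f : Euc d → ℂ} {F : (Fin d → ℤ) → ℝ≥0∞}
    (hf : ∀ x, ‖f x‖ₑ ≤ F (cubeIndex x)) : eLpNorm f p volume ≤ elpNorm p F := by
  by_cases hp0 : p = 0
  · simp [hp0]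
  by_cases hp' : p = ∞
  · subst hp'
    rw [eLpNorm_exponent_top, elpNorm, if_pos rfl]
    exact essSup_le_of_ae_le _ (ae_of_all _ fun x => (hf x).trans (le_iSup F _))
  have hq : 0 < p.toReal := ENNReal.toReal_pos hp0 hp'
  rw [eLpNorm_eq_lintegral_rpow_enorm_toReal hp0 hp', elpNorm, if_neg hp']
  gcongr
  calc ∫⁻ x, ‖f x‖ₑ ^ p.toReal
      ≤ ∫⁻ x, F (cubeIndex x) ^ p.toReal := lintegral_mono fun x => by gcongr; exact hf x
    _ = ∑' n, ∫⁻ x in cube n, F (cubeIndex x) ^ p.toReal := lintegral_eq_tsum_cube _ _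
    _ = ∑' n, F n ^ p.toReal := tsum_congr fun n => by
      rw [setLIntegral_congr_fun (measurableSet_cube n) fun x (hx : cubeIndex x = n) => by rw [hx],
        setLIntegral_const, volume_cube, mul_one]

def genMajorant (Ψ : Fin r → Euc d → ℂ) (C : Fin r → (Fin d → ℤ) → ℂ) (n : Fin d → ℤ) :
    ℝ≥0∞ :=
  ∑ i, ∑' k, cubeSup (Ψ i) k * ‖C i (n - k)‖ₑ

theorem tsum_enorm_genFun_terms_le (hΨ : ∀ i, Continuous (Ψ i)) (x : Euc d) :
    ∑' k, ‖∑ i, C i k * Ψ i (x - zemb k)‖ₑ ≤ genMajorant Ψ C (cubeIndex x) :=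
  calc ∑' k, ‖∑ i, C i k * Ψ i (x - zemb k)‖ₑ
      ≤ ∑' k, ∑ i, ‖C i k‖ₑ * cubeSup (Ψ i) (cubeIndex x - k) := by
        refine ENNReal.tsum_le_tsum fun k => (enorm_sum_le _ _).trans ?_
        gcongr with i
        rw [enorm_mul]
        gcongr
        exact enorm_le_cubeSup_cubeIndex (hΨ i) x k
    _ = ∑ i, ∑' k, ‖C i k‖ₑ * cubeSup (Ψ i) (cubeIndex x - k) :=
        Summable.tsum_finsetSum fun _ _ => ENNReal.summable
    _ = genMajorant Ψ C (cubeIndex x) := Finset.sum_congr rfl fun i _ => by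
        rw [← (Equiv.subLeft (cubeIndex x)).tsum_eq]
        simp [mul_comm]

theorem enorm_genFun_le (hΨ : ∀ i, Continuous (Ψ i)) (x : Euc d) :
    ‖genFun Ψ C x‖ₑ ≤ genMajorant Ψ C (cubeIndex x) :=
  enorm_tsum_le_tsum_enorm.trans (tsum_enorm_genFun_terms_le hΨ x)

theorem elpNorm_genMajorant_le (hp : 1 ≤ p) :
    elpNorm p (genMajorant Ψ C) ≤ (∑ i, WNorm 1 (Ψ i)) * vlpNorm p C :=
  calc elpNorm p (genMajorant Ψ C)
      ≤ ∑ i, elpNorm p (fun n => ∑' k, cubeSup (Ψ i) k * ‖C i (n - k)‖ₑ) :=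
        elpNorm_finset_sum_le hp _ _
    _ ≤ ∑ i, WNorm 1 (Ψ i) * lpNorm p (C i) := by
        gcongr with i
        rw [WNorm_one]
        exact elpNorm_conv_le hp _ _
    _ ≤ ∑ i, (∑ j, WNorm 1 (Ψ j)) * lpNorm p (C i) := by
        gcongr with i
        exact Finset.single_le_sum (f := fun j => WNorm 1 (Ψ j)) (fun _ _ => zero_le)
          (Finset.mem_univ i)
    _ = (∑ i, WNorm 1 (Ψ i)) * vlpNorm p C := (Finset.mul_sum _ _ _).symm

theorem eLpNorm_genFun_le (hp : 1 ≤ p) (hΨ : ∀ i, Continuous (Ψ i)) :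
    eLpNorm (genFun Ψ C) p volume ≤ (∑ i, WNorm 1 (Ψ i)) * vlpNorm p C :=
  (eLpNorm_le_elpNorm_of_enorm_le (enorm_genFun_le hΨ)).trans (elpNorm_genMajorant_le hp)

theorem genMajorant_le (hp : 1 ≤ p) (n : Fin d → ℤ) :
    genMajorant Ψ C n ≤ (∑ i, WNorm 1 (Ψ i)) * vlpNorm p C :=
  (le_elpNorm (by positivity) _ n).trans (elpNorm_genMajorant_le hp)

theorem sum_WNorm_mul_vlpNorm_lt_top (hΨ : ∀ i, MemW01 (Ψ i)) (hC : vlpNorm p C < ∞) :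
    (∑ i, WNorm 1 (Ψ i)) * vlpNorm p C < ∞ :=
  ENNReal.mul_lt_top (ENNReal.sum_lt_top.2 fun i _ => (hΨ i).2) hC

theorem summable_genFun_terms (hp : 1 ≤ p) (hΨ : ∀ i, MemW01 (Ψ i)) (hC : vlpNorm p C < ∞)
    (x : Euc d) : Summable fun k => ∑ i, C i k * Ψ i (x - zemb k) :=
  Summable.of_enorm (((tsum_enorm_genFun_terms_le (fun i => (hΨ i).1) x).trans
    (genMajorant_le hp _)).trans_lt (sum_WNorm_mul_vlpNorm_lt_top hΨ hC)).ne

theorem exists_norm_genFun_le (hp : 1 ≤ p) (hΨ : ∀ i, MemW01 (Ψ i)) (hC : vlpNorm p C < ∞) :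
    ∃ b, ∀ x, ‖genFun Ψ C x‖ ≤ b := by
  refine ⟨((∑ i, WNorm 1 (Ψ i)) * vlpNorm p C).toReal, fun x => ?_⟩
  rw [← toReal_enorm]
  exact ENNReal.toReal_mono (sum_WNorm_mul_vlpNorm_lt_top hΨ hC).ne
    ((enorm_genFun_le (fun i => (hΨ i).1) x).trans (genMajorant_le hp _))

theorem measurable_genFun (hp : 1 ≤ p) (hΨ : ∀ i, MemW01 (Ψ i)) (hC : vlpNorm p C < ∞) :
    Measurable (genFun Ψ C) := by
  refine measurable_of_tendsto_metrizable' atTop (fun s => ?_)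
    (tendsto_pi_nhds.2 fun x => (summable_genFun_terms hp hΨ hC x).hasSum)
  have := fun i => (hΨ i).1
  fun_prop

theorem genFun_add {Ψ₁ Ψ₂ : Fin r → Euc d → ℂ} (hp : 1 ≤ p) (hΨ₁ : ∀ i, MemW01 (Ψ₁ i))
    (hΨ₂ : ∀ i, MemW01 (Ψ₂ i)) (hC : vlpNorm p C < ∞) :
    genFun (fun i x => Ψ₁ i x + Ψ₂ i x) C = genFun Ψ₁ C + genFun Ψ₂ C := by
  ext x
  simp only [genFun, Pi.add_apply, mul_add, Finset.sum_add_distrib]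
  exact (summable_genFun_terms hp hΨ₁ hC x).tsum_add (summable_genFun_terms hp hΨ₂ hC x)

end GeneratorFunctions

section ComplexMeasures
variable {d : ℕ}

def jordanMeasure (μ : ComplexMeasure (Euc d)) : Measure (Euc d) :=
  (ComplexMeasure.re μ).toJordanDecomposition.posPart +
    (ComplexMeasure.re μ).toJordanDecomposition.negPart +
    (ComplexMeasure.im μ).toJordanDecomposition.posPart +
    (ComplexMeasure.im μ).toJordanDecomposition.negPart

instance (μ : ComplexMeasure (Euc d)) : IsFiniteMeasure (jordanMeasure μ) := by
  unfold jordanMeasure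
  infer_instance

theorem enorm_cInt_le (μ : ComplexMeasure (Euc d)) (f : Euc d → ℂ) :
    ‖cInt μ f‖ₑ ≤ ∫⁻ y, ‖f y‖ₑ ∂jordanMeasure μ := by
  simp only [cInt, jordanMeasure, lintegral_add_measure]
  rw [add_assoc]
  refine (enorm_add_le _ _).trans ?_
  rw [enorm_mul, enorm_eq_nnnorm Complex.I, Complex.nnnorm_I, ENNReal.coe_one, one_mul]
  gcongr <;> refine enorm_sub_le.trans ?_ <;> gcongr <;>
    exact enorm_integral_le_lintegral_enorm f

theorem cInt_add (μ : ComplexMeasure (Euc d)) {F G : Euc d → ℂ}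
    (hF : ∀ (ν : Measure (Euc d)) [IsFiniteMeasure ν], Integrable F ν)
    (hG : ∀ (ν : Measure (Euc d)) [IsFiniteMeasure ν], Integrable G ν) :
    cInt μ (fun y => F y + G y) = cInt μ F + cInt μ G := by
  simp only [cInt, integral_add (hF _) (hG _)]
  ring

theorem cInt_neg (μ : ComplexMeasure (Euc d)) (F : Euc d → ℂ) :
    cInt μ (fun y => -F y) = -cInt μ F := by
  simp only [cInt, integral_neg]
  ring

theorem integrable_comp_sub_of_bounded {f : Euc d → ℂ} (hf : Measurable f)
    (hfb : ∃ b, ∀ x, ‖f x‖ ≤ b) (x : Euc d) (ν : Measure (Euc d)) [IsFiniteMeasure ν] :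
    Integrable (fun y => f (x - y)) ν :=
  let ⟨b, hb⟩ := hfb
  Integrable.of_bound (hf.comp (measurable_const.sub measurable_id)).aestronglyMeasurable b
    (ae_of_all _ fun y => hb (x - y))

theorem mconv_add (μ : ComplexMeasure (Euc d)) {f g : Euc d → ℂ} (hf : Measurable f)
    (hg : Measurable g) (hfb : ∃ b, ∀ x, ‖f x‖ ≤ b) (hgb : ∃ b, ∀ x, ‖g x‖ ≤ b) (x : Euc d) :
    mconv μ (f + g) x = mconv μ f x + mconv μ g x :=
  cInt_add μ (fun ν _ => integrable_comp_sub_of_bounded hf hfb x ν)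
    (fun ν _ => integrable_comp_sub_of_bounded hg hgb x ν)

theorem mconv_neg (μ : ComplexMeasure (Euc d)) (f : Euc d → ℂ) (x : Euc d) :
    mconv μ (-f) x = -mconv μ f x :=
  cInt_neg μ fun y => f (x - y)

end ComplexMeasures

section SeparatedSets
variable {d : ℕ} {J : Type*} {X : J → Euc d}

theorem exists_injective_floor_mul {δ : ℝ} (hδ : 0 < δ) (hX : SeparatedWith X δ) :
    ∃ N : ℕ, 0 < N ∧ Function.Injective fun j i => ⌊X j i * N⌋ := by
  obtain ⟨K, hK⟩ : ∃ K : NNReal, LipschitzWith K (WithLp.toLp 2 : (Fin d → ℝ) → Euc d) :=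
    ⟨_, PiLp.lipschitzWith_toLp 2 _⟩
  obtain ⟨N, hN⟩ := exists_nat_gt (K / δ)
  have hN0 : (0 : ℝ) < N := lt_of_le_of_lt (by positivity) hN
  refine ⟨N, Nat.cast_pos.1 hN0, fun j j' hjj' => by_contra fun hne => ?_⟩
  have hcoord : dist (X j).ofLp (X j').ofLp < 1 / N := by
    refine (dist_pi_lt_iff (by positivity)).2 fun i => ?_
    have h := Int.abs_sub_lt_one_of_floor_eq_floor (congrFun hjj' i)
    rw [← sub_mul, abs_mul, Nat.abs_cast] at h
    rwa [Real.dist_eq, lt_div_iff₀ hN0]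
  have hdist : dist (X j) (X j') < δ :=
    calc dist (X j) (X j') ≤ K * dist (X j).ofLp (X j').ofLp := by
          simpa using hK.dist_le_mul (X j).ofLp (X j').ofLp
      _ ≤ K * (1 / N) := by gcongr
      _ < δ := by rwa [← div_eq_mul_one_div, div_lt_iff₀ hN0, mul_comm, ← div_lt_iff₀ hδ]
  exact (hX j j' hne).not_gt hdist

theorem cubeIndex_eq_floor_mul_div (x : Euc d) {N : ℕ} (hN : 0 < N) :
    cubeIndex x = fun i => ⌊x i * N⌋ / (N : ℤ) := by
  ext i
  rw [cubeIndex, ← Int.floor_div_natCast, mul_div_cancel_right₀ _ (by positivity)]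

/-- Each unit cube is the union of `N ^ d` cells of the grid `N⁻¹ ℤ^d`, and `hinj` says that
no cell contains two points of `X`. -/
theorem tsum_comp_cubeIndex_le {N : ℕ} (hN : 0 < N)
    (hinj : Function.Injective fun j i => ⌊X j i * N⌋) (G : (Fin d → ℤ) → ℝ≥0∞) :
    ∑' j, G (cubeIndex (X j)) ≤ (N : ℝ≥0∞) ^ d * ∑' n, G n := by
  have : NeZero N := ⟨hN.ne'⟩
  let e : (Fin d → ℤ) ≃ (Fin d → ℤ) × (Fin d → Fin N) :=
    (Equiv.piCongrRight fun _ => Int.divModEquiv N).trans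
      (Equiv.arrowProdEquivProdArrow _ _ _)
  have he : ∀ j, cubeIndex (X j) = (e fun i => ⌊X j i * N⌋).1 := fun j =>
    cubeIndex_eq_floor_mul_div (X j) hN
  calc ∑' j, G (cubeIndex (X j))
      = ∑' j, G (e fun i => ⌊X j i * N⌋).1 := tsum_congr fun j => by rw [he]
    _ ≤ ∑' q : (Fin d → ℤ) × (Fin d → Fin N), G q.1 :=
        ENNReal.tsum_comp_le_tsum_of_injective (e.injective.comp hinj) fun q => G q.1
    _ = (N : ℝ≥0∞) ^ d * ∑' n, G n := by
        rw [ENNReal.tsum_prod (f := fun n _ => G n), ← ENNReal.tsum_mul_left]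
        simp

theorem elpNorm_comp_cubeIndex_le {p : ℝ≥0∞} (hp : 1 ≤ p) {N : ℕ} (hN : 0 < N)
    (hinj : Function.Injective fun j i => ⌊X j i * N⌋) (F : (Fin d → ℤ) → ℝ≥0∞) :
    elpNorm p (fun j => F (cubeIndex (X j))) ≤ (N : ℝ≥0∞) ^ d * elpNorm p F :=
  elpNorm_comp_le_of_tsum_comp_le hp (one_le_pow₀ (by exact_mod_cast hN))
    (tsum_comp_cubeIndex_le hN hinj) F

end SeparatedSets

section SamplingBound
variable {d t : ℕ} {p : ℝ≥0∞} {J : Type*} {X : J → Euc d}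

def cornerShifts (d : ℕ) : Finset (Fin d → ℤ) := Fintype.piFinset fun _ => {0, 1}

theorem cubeIndex_sub_sub_mem_cornerShifts (x y : Euc d) :
    cubeIndex x - cubeIndex y - cubeIndex (x - y) ∈ cornerShifts d := by
  simp only [cornerShifts, Fintype.mem_piFinset, Finset.mem_insert, Finset.mem_singleton]
  intro i
  have h₁ := Int.le_floor_add (x i - y i) (y i)
  have h₂ := Int.le_floor_add_floor (x i - y i) (y i)
  simp only [sub_add_cancel] at h₁ h₂
  simp only [Pi.sub_apply, cubeIndex, PiLp.sub_apply]
  omega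

theorem elpNorm_cornerSum_le (hp : 1 ≤ p) (F : (Fin d → ℤ) → ℝ≥0∞) :
    elpNorm p (fun n => ∑ b ∈ cornerShifts d, F (n - b)) ≤ 2 ^ d * elpNorm p F := by
  refine (elpNorm_finset_sum_le hp _ _).trans_eq ?_
  have hshift : ∀ b, elpNorm p (fun n => F (n - b)) = elpNorm p F := fun b =>
    elpNorm_comp_equiv (Equiv.subRight b) F
  simp [hshift, cornerShifts, Fintype.card_piFinset]

theorem lintegral_enorm_comp_sub_le {f : Euc d → ℂ} {F : (Fin d → ℤ) → ℝ≥0∞}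
    (hf : ∀ z, ‖f z‖ₑ ≤ F (cubeIndex z)) (ν : Measure (Euc d)) (x : Euc d) :
    ∫⁻ y, ‖f (x - y)‖ₑ ∂ν ≤
      ∑' m, ν (cube m) * ∑ b ∈ cornerShifts d, F (cubeIndex x - m - b) :=
  calc ∫⁻ y, ‖f (x - y)‖ₑ ∂ν = ∑' m, ∫⁻ y in cube m, ‖f (x - y)‖ₑ ∂ν :=
        lintegral_eq_tsum_cube _ _
    _ ≤ ∑' m, ∫⁻ _ in cube m, ∑ b ∈ cornerShifts d, F (cubeIndex x - m - b) ∂ν := by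
        refine ENNReal.tsum_le_tsum fun m => setLIntegral_mono' (measurableSet_cube m)
          fun y (hy : cubeIndex y = m) => (hf _).trans ?_
        refine le_of_eq_of_le ?_ (Finset.single_le_sum (f := fun b => F (cubeIndex x - m - b))
          (fun _ _ => zero_le) (cubeIndex_sub_sub_mem_cornerShifts x y))
        rw [← hy]
        simp
    _ = ∑' m, ν (cube m) * ∑ b ∈ cornerShifts d, F (cubeIndex x - m - b) := by
        simp only [setLIntegral_const, mul_comm]

def samplingSum (p : ℝ≥0∞) (μ : Fin t → ComplexMeasure (Euc d)) (X : J → Euc d)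
    (f : Euc d → ℂ) : ℝ≥0∞ :=
  ∑ l, lpNorm p fun j => mconv (μ l) f (X j)

-- `SamplingSet p Φ μ X` unfolds to `∃ A B, SamplingWith p Φ μ X A B`.
def SamplingWith {r : ℕ} (p : ℝ≥0∞) (Φ : Fin r → Euc d → ℂ)
    (μ : Fin t → ComplexMeasure (Euc d)) (X : J → Euc d) (A B : ℝ) : Prop :=
  0 < A ∧ A ≤ B ∧ ∀ C : Fin r → (Fin d → ℤ) → ℂ, vlpNorm p C < ∞ →
    ENNReal.ofReal A * eLpNorm (genFun Φ C) p volume ≤ samplingSum p μ X (genFun Φ C) ∧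
    samplingSum p μ X (genFun Φ C) ≤ ENNReal.ofReal B * eLpNorm (genFun Φ C) p volume

theorem lpNorm_samples_mconv_le (hp : 1 ≤ p) {N : ℕ} (hN : 0 < N)
    (hinj : Function.Injective fun j i => ⌊X j i * N⌋) (μ : ComplexMeasure (Euc d))
    {f : Euc d → ℂ} {F : (Fin d → ℤ) → ℝ≥0∞} (hf : ∀ z, ‖f z‖ₑ ≤ F (cubeIndex z)) :
    lpNorm p (fun j => mconv μ f (X j)) ≤
      (N : ℝ≥0∞) ^ d * (jordanMeasure μ Set.univ * (2 ^ d * elpNorm p F)) :=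
  calc lpNorm p (fun j => mconv μ f (X j))
      ≤ elpNorm p fun j => ∑' m, jordanMeasure μ (cube m) *
          ∑ b ∈ cornerShifts d, F (cubeIndex (X j) - m - b) :=
        elpNorm_mono fun j => (enorm_cInt_le μ _).trans (lintegral_enorm_comp_sub_le hf _ (X j))
    _ ≤ (N : ℝ≥0∞) ^ d * elpNorm p fun n => ∑' m, jordanMeasure μ (cube m) *
          ∑ b ∈ cornerShifts d, F (n - m - b) :=
        elpNorm_comp_cubeIndex_le hp hN hinj _
    _ ≤ (N : ℝ≥0∞) ^ d * (jordanMeasure μ Set.univ * (2 ^ d * elpNorm p F)) := by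
        gcongr
        refine (elpNorm_conv_le hp (fun m => jordanMeasure μ (cube m))
          (fun k => ∑ b ∈ cornerShifts d, F (k - b))).trans ?_
        rw [tsum_measure_cube]
        gcongr
        exact elpNorm_cornerSum_le hp F

theorem exists_samplingSum_genFun_le (hp : 1 ≤ p) (μ : Fin t → ComplexMeasure (Euc d))
    (hX : SeparatedSet X) :
    ∃ K : ℝ, 0 ≤ K ∧ ∀ {r : ℕ} (Ψ : Fin r → Euc d → ℂ), (∀ i, Continuous (Ψ i)) →
      ∀ C, samplingSum p μ X (genFun Ψ C) ≤
        ENNReal.ofReal K * ((∑ i, WNorm 1 (Ψ i)) * vlpNorm p C) := by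
  obtain ⟨δ, hδ, hsep⟩ := hX
  obtain ⟨N, hN, hinj⟩ := exists_injective_floor_mul hδ hsep
  set K : ℝ≥0∞ := (N : ℝ≥0∞) ^ d * ((∑ l, jordanMeasure (μ l) Set.univ) * 2 ^ d)
  have hK : K ≠ ∞ := ENNReal.mul_ne_top (by simp)
    (ENNReal.mul_ne_top (ENNReal.sum_ne_top.2 fun l _ => measure_ne_top _ _) (by simp))
  refine ⟨K.toReal, ENNReal.toReal_nonneg, fun Ψ hΨ C => ?_⟩
  rw [ENNReal.ofReal_toReal hK]
  calc samplingSum p μ X (genFun Ψ C)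
      ≤ ∑ l, (N : ℝ≥0∞) ^ d * (jordanMeasure (μ l) Set.univ *
          (2 ^ d * elpNorm p (genMajorant Ψ C))) :=
        Finset.sum_le_sum fun l _ =>
          lpNorm_samples_mconv_le hp hN hinj (μ l) (enorm_genFun_le hΨ)
    _ = K * elpNorm p (genMajorant Ψ C) := by
        simp only [K, Finset.mul_sum, Finset.sum_mul]
        exact Finset.sum_congr rfl fun l _ => by ring
    _ ≤ K * ((∑ i, WNorm 1 (Ψ i)) * vlpNorm p C) := by
        gcongr
        exact elpNorm_genMajorant_le hp

theorem samplingSum_add_le (hp : 1 ≤ p) (μ : Fin t → ComplexMeasure (Euc d)) (X : J → Euc d)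
    {f g : Euc d → ℂ} (hf : Measurable f) (hg : Measurable g) (hfb : ∃ b, ∀ x, ‖f x‖ ≤ b)
    (hgb : ∃ b, ∀ x, ‖g x‖ ≤ b) :
    samplingSum p μ X (f + g) ≤ samplingSum p μ X f + samplingSum p μ X g := by
  simp only [samplingSum, lpNorm_eq_elpNorm, ← Finset.sum_add_distrib]
  gcongr with l
  refine (elpNorm_mono fun j => ?_).trans (elpNorm_add_le hp _ _)
  rw [mconv_add (μ l) hf hg hfb hgb]
  exact enorm_add_le _ _

theorem samplingSum_neg (μ : Fin t → ComplexMeasure (Euc d)) (X : J → Euc d)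
    (f : Euc d → ℂ) : samplingSum p μ X (-f) = samplingSum p μ X f := by
  simp only [samplingSum, lpNorm_eq_elpNorm, mconv_neg, enorm_neg]

theorem samplingSum_sub_le (hp : 1 ≤ p) (μ : Fin t → ComplexMeasure (Euc d)) (X : J → Euc d)
    {f g : Euc d → ℂ} (hf : Measurable f) (hg : Measurable g) (hfb : ∃ b, ∀ x, ‖f x‖ ≤ b)
    (hgb : ∃ b, ∀ x, ‖g x‖ ≤ b) :
    samplingSum p μ X (f - g) ≤ samplingSum p μ X f + samplingSum p μ X g := by
  obtain ⟨b, hb⟩ := hgb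
  rw [sub_eq_add_neg, ← samplingSum_neg μ X g]
  exact samplingSum_add_le hp μ X hf hg.neg hfb ⟨b, fun x => (norm_neg (g x)).trans_le (hb x)⟩

theorem eLpNorm_samplingSum_le_of_eq_add (hp : 1 ≤ p) (μ : Fin t → ComplexMeasure (Euc d))
    (X : J → Euc d) {f g h : Euc d → ℂ} (hfgh : f = g + h) (hg : Measurable g)
    (hh : Measurable h) (hgb : ∃ b, ∀ x, ‖g x‖ ≤ b) (hhb : ∃ b, ∀ x, ‖h x‖ ≤ b) :
    (eLpNorm f p volume ≤ eLpNorm g p volume + eLpNorm h p volume ∧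
      eLpNorm g p volume ≤ eLpNorm f p volume + eLpNorm h p volume) ∧
    (samplingSum p μ X f ≤ samplingSum p μ X g + samplingSum p μ X h ∧
      samplingSum p μ X g ≤ samplingSum p μ X f + samplingSum p μ X h) := by
  have hgfh : g = f - h := by rw [hfgh, add_sub_cancel_right]
  have hf : Measurable f := hfgh ▸ hg.add hh
  have hfb : ∃ b, ∀ x, ‖f x‖ ≤ b := by
    obtain ⟨b, hb⟩ := hgb
    obtain ⟨b', hb'⟩ := hhb
    exact ⟨b + b', fun x => hfgh ▸ (norm_add_le _ _).trans (add_le_add (hb x) (hb' x))⟩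
  refine ⟨⟨?_, ?_⟩, ?_, ?_⟩
  · rw [hfgh]
    exact eLpNorm_add_le hg.aestronglyMeasurable hh.aestronglyMeasurable hp
  · conv_lhs => rw [hgfh]
    exact eLpNorm_sub_le hf.aestronglyMeasurable hh.aestronglyMeasurable hp
  · rw [hfgh]
    exact samplingSum_add_le hp μ X hg hh hgb hhb
  · conv_lhs => rw [hgfh]
    exact samplingSum_sub_le hp μ X hf hh hfb hhb

end SamplingBound

section TwoSidedBounds
variable {c F G D : ℝ≥0∞} {m ε : ℝ}

theorem riesz_bounds_of_perturb {M : ℝ} (hc : c ≠ ∞) (hm : 0 < m) (hmM : m ≤ M) (hε : 0 ≤ ε)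
    (hεm : ε ≤ m / 2) (hlow : ENNReal.ofReal m * c ≤ F) (hup : F ≤ ENNReal.ofReal M * c)
    (hFG : F ≤ G + D) (hGF : G ≤ F + D) (hD : D ≤ ENNReal.ofReal ε * c) :
    ENNReal.ofReal (m / 2) * c ≤ G ∧ G ≤ ENNReal.ofReal (M + ε) * c := by
  constructor
  · refine ENNReal.le_of_add_le_add_right (a := ENNReal.ofReal (m / 2) * c) (by finiteness) ?_
    calc ENNReal.ofReal (m / 2) * c + ENNReal.ofReal (m / 2) * c = ENNReal.ofReal m * c := by
          rw [← add_mul, ← ENNReal.ofReal_add (by positivity) (by positivity), add_halves]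
      _ ≤ G + D := hlow.trans hFG
      _ ≤ G + ENNReal.ofReal (m / 2) * c := by
          gcongr
          exact hD.trans (by gcongr)
  · calc G ≤ ENNReal.ofReal M * c + ENNReal.ofReal ε * c := hGF.trans (add_le_add hup hD)
      _ = ENNReal.ofReal (M + ε) * c := by
          rw [← add_mul, ENNReal.ofReal_add (by linarith) hε]

theorem sampling_bounds_of_perturb {S T E : ℝ≥0∞} {A B K : ℝ} (hG : G ≠ ∞)
    (hA : 0 < A) (hB : 0 ≤ B) (hK : 0 ≤ K) (hε : 0 ≤ ε) (hεm : ε ≤ m / 2)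
    (hεA : (K + A) * ε ≤ A / 2 * (m / 2)) (hcG : ENNReal.ofReal (m / 2) * c ≤ G)
    (hlow : ENNReal.ofReal A * F ≤ S) (hup : S ≤ ENNReal.ofReal B * F)
    (hFG : F ≤ G + D) (hGF : G ≤ F + D) (hD : D ≤ ENNReal.ofReal ε * c)
    (hST : S ≤ T + E) (hTS : T ≤ S + E) (hE : E ≤ ENNReal.ofReal (K * ε) * c) :
    ENNReal.ofReal (A / 2) * G ≤ T ∧ T ≤ ENNReal.ofReal (2 * B + K) * G := by
  constructor
  · refine ENNReal.le_of_add_le_add_right (a := ENNReal.ofReal (A / 2) * G) (by finiteness) ?_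
    calc ENNReal.ofReal (A / 2) * G + ENNReal.ofReal (A / 2) * G = ENNReal.ofReal A * G := by
          rw [← add_mul, ← ENNReal.ofReal_add (by positivity) (by positivity), add_halves]
      _ ≤ ENNReal.ofReal A * F + ENNReal.ofReal A * D := by
          rw [← mul_add]
          gcongr
      _ ≤ T + (ENNReal.ofReal (K * ε) * c + ENNReal.ofReal (A * ε) * c) := by
          rw [← add_assoc, ENNReal.ofReal_mul hA.le, mul_assoc]
          gcongr
          exact (hlow.trans hST).trans (by gcongr)
      _ = T + ENNReal.ofReal ((K + A) * ε) * c := by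
          rw [← add_mul, ← ENNReal.ofReal_add (by positivity) (by positivity), add_mul]
      _ ≤ T + ENNReal.ofReal (A / 2) * (ENNReal.ofReal (m / 2) * c) := by
          rw [← mul_assoc, ← ENNReal.ofReal_mul (by positivity)]
          gcongr
      _ ≤ T + ENNReal.ofReal (A / 2) * G := by gcongr
  · calc T ≤ ENNReal.ofReal B * (G + D) + ENNReal.ofReal (K * ε) * c :=
          hTS.trans (add_le_add (hup.trans (by gcongr)) hE)
      _ ≤ ENNReal.ofReal B * G + ENNReal.ofReal ((B + K) * ε) * c := by
          rw [mul_add, add_assoc, add_mul, ENNReal.ofReal_add (by positivity) (by positivity),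
            add_mul, ENNReal.ofReal_mul hB, mul_assoc]
          gcongr
      _ ≤ ENNReal.ofReal B * G + ENNReal.ofReal (B + K) * (ENNReal.ofReal (m / 2) * c) := by
          rw [← mul_assoc, ← ENNReal.ofReal_mul (by positivity)]
          gcongr
      _ ≤ ENNReal.ofReal B * G + ENNReal.ofReal (B + K) * G := by gcongr
      _ = ENNReal.ofReal (2 * B + K) * G := by
          rw [← add_mul, ← ENNReal.ofReal_add hB (by positivity)]
          ring_nf

end TwoSidedBounds

theorem rieszWith_samplingWith_of_perturb {d r t : ℕ} {p : ℝ≥0∞} {J : Type*}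
    {μ : Fin t → ComplexMeasure (Euc d)} {X : J → Euc d} {Φ Θ : Fin r → Euc d → ℂ}
    {m M A B K ε : ℝ} (hp : 1 ≤ p) (hΦR : RieszWith p Φ m M) (hΦS : SamplingWith p Φ μ X A B)
    (hK : 0 ≤ K) (hKS : ∀ Ψ : Fin r → Euc d → ℂ, (∀ i, Continuous (Ψ i)) → ∀ C,
      samplingSum p μ X (genFun Ψ C) ≤ ENNReal.ofReal K * ((∑ i, WNorm 1 (Ψ i)) * vlpNorm p C))
    (hε : 0 ≤ ε) (hεm : ε ≤ m / 2) (hεA : (K + A) * ε ≤ A / 2 * (m / 2))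
    (hΘ : ∀ i, MemW01 (Θ i)) (hΔ : ∀ i, MemW01 fun x => Φ i x - Θ i x)
    (hsmall : ∑ i, WNorm 1 (fun x => Φ i x - Θ i x) ≤ ENNReal.ofReal ε) :
    RieszWith p Θ (m / 2) (M + ε) ∧ SamplingWith p Θ μ X (A / 2) (2 * B + K) := by
  obtain ⟨hm, hmM, hΦR⟩ := hΦR
  obtain ⟨hA, hAB, hΦS⟩ := hΦS
  have key : ∀ C, vlpNorm p C < ∞ →
      (ENNReal.ofReal (m / 2) * vlpNorm p C ≤ eLpNorm (genFun Θ C) p volume ∧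
        eLpNorm (genFun Θ C) p volume ≤ ENNReal.ofReal (M + ε) * vlpNorm p C) ∧
      (ENNReal.ofReal (A / 2) * eLpNorm (genFun Θ C) p volume ≤ samplingSum p μ X (genFun Θ C) ∧
        samplingSum p μ X (genFun Θ C) ≤
          ENNReal.ofReal (2 * B + K) * eLpNorm (genFun Θ C) p volume) := by
    intro C hC
    have hsplit : genFun Φ C = genFun Θ C + genFun (fun i x => Φ i x - Θ i x) C := by
      rw [← genFun_add hp hΘ hΔ hC]
      simp
    obtain ⟨⟨hFG, hGF⟩, hST, hTS⟩ := eLpNorm_samplingSum_le_of_eq_add hp μ X hsplit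
      (measurable_genFun hp hΘ hC) (measurable_genFun hp hΔ hC)
      (exists_norm_genFun_le hp hΘ hC) (exists_norm_genFun_le hp hΔ hC)
    have hD := (eLpNorm_genFun_le (C := C) hp fun i => (hΔ i).1).trans
      (mul_le_mul_left hsmall _)
    have hE := (hKS _ (fun i => (hΔ i).1) C).trans (mul_le_mul_right (mul_le_mul_left hsmall _) _)
    rw [← mul_assoc, ← ENNReal.ofReal_mul hK] at hE
    obtain ⟨hlow, hup⟩ := hΦR C hC
    obtain ⟨hSlow, hSup⟩ := hΦS C hC
    obtain ⟨hGlow, hGup⟩ := riesz_bounds_of_perturb hC.ne hm hmM hε hεm hlow hup hFG hGF hD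
    exact ⟨⟨hGlow, hGup⟩, sampling_bounds_of_perturb (hGup.trans_lt (by finiteness)).ne hA
      (hA.le.trans hAB) hK hε hεm hεA hGlow hSlow hSup hFG hGF hD hST hTS hE⟩
  exact ⟨⟨by positivity, by linarith, fun C hC => (key C hC).1⟩,
    ⟨by positivity, by linarith, fun C hC => (key C hC).2⟩⟩

end

open MeasureTheory ENNReal in
theorem stability_under_generator_perturbation_general
    (d r t : ℕ) (p : ℝ≥0∞) (hp : 1 ≤ p) (J : Type)
    (μ : Fin t → ComplexMeasure (Euc d))
    (Φ : Fin r → Euc d → ℂ) (hΦ : ∀ i, MemW01 (Φ i)) (hR : RieszCond p Φ)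
    (X : J → Euc d) (hsep : SeparatedSet X)
    (hsamp : SamplingSet p Φ μ X) :
    ∃ ε₀ : ℝ, 0 < ε₀ ∧ ∀ Θ : Fin r → Euc d → ℂ, (∀ i, MemW01 (Θ i)) →
      (∑ i, WNorm 1 (fun x => Φ i x - Θ i x)) < ENNReal.ofReal ε₀ →
      RieszCond p Θ ∧ SamplingSet p Θ μ X := by
  obtain ⟨m, M, hΦR⟩ := hR
  obtain ⟨A, B, hΦS⟩ := hsamp
  obtain ⟨K, hK, hKS⟩ := exists_samplingSum_genFun_le hp μ hsep
  have hm := hΦR.1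
  have hA := hΦS.1
  set ε := A * m / (4 * (K + A))
  have hεA : (K + A) * ε = A / 2 * (m / 2) := by
    simp only [ε]
    field_simp
    ring
  have hεm : ε ≤ m / 2 := by
    rw [div_le_div_iff₀ (by positivity) two_pos]
    nlinarith
  refine ⟨ε, by positivity, fun Θ hΘ hsmall => ?_⟩
  have hΔ : ∀ i, MemW01 fun x => Φ i x - Θ i x := fun i => ⟨(hΦ i).1.sub (hΘ i).1,
    (Finset.single_le_sum (f := fun j => WNorm 1 fun x => Φ j x - Θ j x) (fun _ _ => zero_le)
      (Finset.mem_univ i)).trans_lt (hsmall.trans ofReal_lt_top)⟩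
  obtain ⟨hΘR, hΘS⟩ := rieszWith_samplingWith_of_perturb hp hΦR hΦS hK hKS (by positivity) hεm
    hεA.le hΘ hΔ hsmall.le
  exact ⟨⟨_, _, hΘR⟩, ⟨_, _, hΘS⟩⟩

open MeasureTheory ENNReal in
/-- Theorem 3.1: stability of sampling under perturbation of the
generators of the shift invariant space. -/
theorem stability_under_generator_perturbation
    (d r t : ℕ) (p : ℝ≥0∞) (hp : 1 ≤ p) (J : Type) [Countable J]
    (μ : Fin t → ComplexMeasure (Euc d))
    (Φ : Fin r → Euc d → ℂ) (hΦ : ∀ i, MemW01 (Φ i)) (hR : RieszCond p Φ)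
    (X : J → Euc d) (hsep : SeparatedSet X)
    (hsamp : SamplingSet p Φ μ X) :
    ∃ ε₀ : ℝ, 0 < ε₀ ∧ ∀ Θ : Fin r → Euc d → ℂ, (∀ i, MemW01 (Θ i)) →
      (∑ i, WNorm 1 (fun x => Φ i x - Θ i x)) < ENNReal.ofReal ε₀ →
      RieszCond p Θ ∧ SamplingSet p Θ μ X :=
  stability_under_generator_perturbation_general d r t p hp J μ Φ hΦ hR X hsep hsamp
end

section
/- Let d∈ℕ, let φ:ℝ^d→ℂ be continuous with ‖φ‖_{W^1}<∞ (i.e., φ∈W₀^1), and let μ be a finite complex Borel measure on ℝ^d. Then the convolution φ∗μ, defined by (φ∗μ)(x)=∫_{ℝ^d}φ(x−y)dμ(y), is continuous on ℝ^d and satisfies ‖φ∗μ‖_{W^1} ≤ 2^d ‖φ‖_{W^1} ‖μ‖. -/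
open MeasureTheory ENNReal

/-!
A continuous `φ` is bounded by `‖φ‖_{W¹}`, so continuity of `φ ∗ μ` is dominated convergence.
For the bound, choose for every `k ∈ ℤ^d` a point `x_k` of the unit cube where `|φ ∗ μ|` attains
its maximum over `k + [0,1]^d`, and a unimodular `c_k` with `c_k (φ ∗ μ)(x_k + k) ≥ 0`. For a
finite `K ⊆ ℤ^d`, `∑_{k ∈ K} |(φ ∗ μ)(x_k + k)|` is the integral against `μ` of
`F(y) = ∑_{k ∈ K} c_k φ(x_k + k - y)`, hence at most `sup |F| · ‖μ‖`. For fixed `y`, the point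
`x_k + k - y` lies in the cube `k + ⌊-y⌋ + ε` for some `ε ∈ {0,1}^d`, and for fixed `ε` distinct
`k` give distinct cubes, so `sup |F| ≤ 2^d ‖φ‖_{W¹}`.
-/

open MeasureTheory ENNReal Filter Topology
open scoped NNReal

section EssSup

variable {X : Type*} [TopologicalSpace X] [MeasurableSpace X] [OpensMeasurableSpace X]
  {μ : Measure X} [μ.IsOpenPosMeasure]

lemma le_essSup_restrict_of_mem_closure_interior {f : X → ℝ≥0∞} (hf : Continuous f)
    {s : Set X} {x : X} (hx : x ∈ closure (interior s)) : f x ≤ essSup f (μ.restrict s) := by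
  by_contra! hlt
  set U := f ⁻¹' Set.Ioi (essSup f (μ.restrict s))
  have hU : IsOpen U := isOpen_Ioi.preimage hf
  have hUs : μ.restrict s U = 0 := by
    simpa [ae_iff, U, Set.preimage, Set.mem_Ioi] using ENNReal.ae_le_essSup f (μ := μ.restrict s)
  rw [Measure.restrict_apply hU.measurableSet] at hUs
  have hpos : 0 < μ (U ∩ interior s) :=
    (hU.inter isOpen_interior).measure_pos μ (mem_closure_iff.1 hx U hU hlt)
  exact hpos.ne' (measure_mono_null (Set.inter_subset_inter_right U interior_subset) hUs)

end EssSup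

variable {d : ℕ}

def unitCube (d : ℕ) : Set (Euc d) := {x | ∀ i, x i ∈ Set.Icc (0 : ℝ) 1}

lemma unitCube_eq_preimage :
    unitCube d = EuclideanSpace.equiv (Fin d) ℝ ⁻¹' Set.univ.pi fun _ => Set.Icc 0 1 := by
  ext x; simp only [unitCube, Set.mem_preimage, Set.mem_univ_pi]; rfl

lemma isCompact_unitCube : IsCompact (unitCube d) := by
  rw [unitCube_eq_preimage]
  exact (EuclideanSpace.equiv (Fin d) ℝ).toHomeomorph.isCompact_preimage.2
    (isCompact_univ_pi fun _ => isCompact_Icc)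

lemma unitCube_subset_closure_interior_s11 : unitCube d ⊆ closure (interior (unitCube d)) := by
  have hconv : Convex ℝ (unitCube d) := by
    rw [unitCube_eq_preimage]
    exact (convex_pi fun _ _ => convex_Icc 0 1).linear_preimage
      (EuclideanSpace.equiv (Fin d) ℝ).toLinearMap
  have hint : (interior (unitCube d)).Nonempty := by
    let e := EuclideanSpace.equiv (Fin d) ℝ
    have hopen : IsOpen (e ⁻¹' Set.univ.pi fun _ => Set.Ioo (0 : ℝ) 1) :=
      (isOpen_set_pi Set.finite_univ fun _ _ => isOpen_Ioo).preimage e.continuous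
    refine ⟨e.symm fun _ => 1 / 2, hopen.subset_interior_iff.2 ?_ fun i _ => by norm_num⟩
    rw [unitCube_eq_preimage]
    exact Set.preimage_mono (Set.pi_mono fun _ _ => Set.Ioo_subset_Icc_self)
  rw [hconv.closure_interior_eq_closure_of_nonempty_interior hint,
    isCompact_unitCube.isClosed.closure_eq]

lemma cubeSup_le {f : Euc d → ℂ} {k : Fin d → ℤ} {c : ℝ≥0∞}
    (h : ∀ x ∈ unitCube d, (‖f (x + zemb k)‖₊ : ℝ≥0∞) ≤ c) : cubeSup f k ≤ c :=
  essSup_le_of_ae_le c <| (ae_restrict_mem isCompact_unitCube.isClosed.measurableSet).mono h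

lemma nnnorm_le_cubeSup {f : Euc d → ℂ} (hf : Continuous f) (k : Fin d → ℤ) {x : Euc d}
    (hx : x ∈ unitCube d) : (‖f (x + zemb k)‖₊ : ℝ≥0∞) ≤ cubeSup f k :=
  le_essSup_restrict_of_mem_closure_interior (by fun_prop) (unitCube_subset_closure_interior_s11 hx)

lemma WNorm_one_eq_tsum (f : Euc d → ℂ) : WNorm 1 f = ∑' k, cubeSup f k := by
  simp [WNorm]

noncomputable def floorVec (z : Euc d) : Fin d → ℤ := fun i => ⌊z i⌋

lemma sub_zemb_floorVec_mem_unitCube (z : Euc d) : z - zemb (floorVec z) ∈ unitCube d := by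
  intro i
  simpa [zemb, floorVec] using (Int.fract_lt_one (z i)).le

lemma nnnorm_le_cubeSup_floorVec {f : Euc d → ℂ} (hf : Continuous f) (z : Euc d) :
    (‖f z‖₊ : ℝ≥0∞) ≤ cubeSup f (floorVec z) := by
  simpa using nnnorm_le_cubeSup hf (floorVec z) (sub_zemb_floorVec_mem_unitCube z)

lemma norm_le_toReal_WNorm {f : Euc d → ℂ} (hf : Continuous f) (hfW : WNorm 1 f < ∞)
    (z : Euc d) : ‖f z‖ ≤ (WNorm 1 f).toReal := by
  have h : (‖f z‖₊ : ℝ≥0∞) ≤ WNorm 1 f := by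
    rw [WNorm_one_eq_tsum]
    exact (nnnorm_le_cubeSup_floorVec hf z).trans (ENNReal.le_tsum _)
  simpa using ENNReal.toReal_mono hfW.ne h

lemma sum_comp_add_le_card_mul_tsum {G : Type*} [AddGroup G] [DecidableEq G] (f : G → ℝ≥0∞)
    {K D : Finset G} {δ : G → G} (hδ : ∀ k ∈ K, δ k ∈ D) :
    ∑ k ∈ K, f (k + δ k) ≤ D.card * ∑' g, f g := by
  rw [← Finset.sum_fiberwise_of_maps_to hδ]
  calc ∑ e ∈ D, ∑ k ∈ K with δ k = e, f (k + δ k)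
      = ∑ e ∈ D, ∑ k ∈ K with δ k = e, f (k + e) :=
        Finset.sum_congr rfl fun e _ => Finset.sum_congr rfl fun k hk => by
          rw [(Finset.mem_filter.1 hk).2]
    _ ≤ ∑ _e ∈ D, ∑' g, f g := Finset.sum_le_sum fun e _ =>
        (ENNReal.sum_le_tsum _).trans
          (ENNReal.tsum_comp_le_tsum_of_injective (add_left_injective e) f)
    _ = D.card * ∑' g, f g := by rw [Finset.sum_const, nsmul_eq_mul]

lemma floorVec_add_zemb_sub_sub_mem {x : Euc d} (hx : x ∈ unitCube d) (k : Fin d → ℤ)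
    (y : Euc d) :
    floorVec (x + zemb k - y) - k ∈ Fintype.piFinset fun i => {⌊-y i⌋, ⌊-y i⌋ + 1} := by
  rw [Fintype.mem_piFinset]
  intro i
  have hfloor : floorVec (x + zemb k - y) i - k i = ⌊x i - y i⌋ := by
    simp [floorVec, zemb, add_sub_right_comm _ (k i : ℝ)]
  have hlo : ⌊-y i⌋ ≤ ⌊x i - y i⌋ := Int.floor_mono (by linarith [(hx i).1])
  have hhi : ⌊x i - y i⌋ ≤ ⌊-y i⌋ + 1 := by
    rw [← Int.floor_add_one]; exact Int.floor_mono (by linarith [(hx i).2])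
  simp only [Pi.sub_apply, hfloor, Finset.mem_insert, Finset.mem_singleton]
  omega

lemma sum_nnnorm_le_two_pow_mul_WNorm {f : Euc d → ℂ} (hf : Continuous f)
    (K : Finset (Fin d → ℤ)) {x : (Fin d → ℤ) → Euc d} (hx : ∀ k, x k ∈ unitCube d) (y : Euc d) :
    ∑ k ∈ K, (‖f (x k + zemb k - y)‖₊ : ℝ≥0∞) ≤ 2 ^ d * WNorm 1 f := by
  classical
  set D := Fintype.piFinset fun i => ({⌊-y i⌋, ⌊-y i⌋ + 1} : Finset ℤ)
  have hD : D.card = 2 ^ d := by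
    simp [D, Fintype.card_piFinset, Finset.card_pair (ne_of_lt (Int.lt_succ _))]
  calc ∑ k ∈ K, (‖f (x k + zemb k - y)‖₊ : ℝ≥0∞)
      ≤ ∑ k ∈ K, cubeSup f (k + (floorVec (x k + zemb k - y) - k)) :=
        Finset.sum_le_sum fun k _ => by simpa using nnnorm_le_cubeSup_floorVec hf _
    _ ≤ D.card * ∑' m, cubeSup f m :=
        sum_comp_add_le_card_mul_tsum _ fun k _ => floorVec_add_zemb_sub_sub_mem (hx k) k y
    _ = 2 ^ d * WNorm 1 f := by rw [hD, WNorm_one_eq_tsum]; norm_cast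

lemma tendsto_cInt_of_bounded {ι : Type*} {l : Filter ι} [l.IsCountablyGenerated]
    (μ : ComplexMeasure (Euc d)) {F : ι → Euc d → ℂ} {f : Euc d → ℂ} {M : ℝ}
    (hF : ∀ n, Measurable (F n)) (hM : ∀ n y, ‖F n y‖ ≤ M)
    (hlim : ∀ y, Tendsto (fun n => F n y) l (𝓝 (f y))) :
    Tendsto (fun n => cInt μ (F n)) l (𝓝 (cInt μ f)) := by
  have key : ∀ (ν : Measure (Euc d)) [IsFiniteMeasure ν],
      Tendsto (fun n => ∫ y, F n y ∂ν) l (𝓝 (∫ y, f y ∂ν)) := fun ν _ =>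
    tendsto_integral_filter_of_dominated_convergence (fun _ => M)
      (Eventually.of_forall fun n => (hF n).aestronglyMeasurable)
      (Eventually.of_forall fun n => Eventually.of_forall (hM n)) (integrable_const M)
      (Eventually.of_forall hlim)
  exact ((key _).sub (key _)).add (((key _).sub (key _)).const_mul _)

lemma continuous_mconv (μ : ComplexMeasure (Euc d)) {φ : Euc d → ℂ} (hφ : Continuous φ) {M : ℝ}
    (hM : ∀ z, ‖φ z‖ ≤ M) : Continuous (mconv μ φ) :=
  continuous_iff_continuousAt.2 fun x =>
    tendsto_cInt_of_bounded μ (fun _ => by fun_prop) (fun _ _ => hM _)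
      fun y => (hφ.comp (continuous_id.sub continuous_const)).tendsto x

lemma cInt_sum_mul {ι : Type*} (μ : ComplexMeasure (Euc d)) (K : Finset ι) (c : ι → ℂ)
    {f : ι → Euc d → ℂ}
    (hf : ∀ k ∈ K, ∀ (ν : Measure (Euc d)) [IsFiniteMeasure ν], Integrable (f k) ν) :
    cInt μ (fun y => ∑ k ∈ K, c k * f k y) = ∑ k ∈ K, c k * cInt μ (f k) := by
  unfold cInt
  simp only [integral_finsetSum K fun k hk => (hf k hk _).const_mul (c k), integral_const_mul,
    Finset.mul_sum, ← Finset.sum_sub_distrib, ← Finset.sum_add_distrib]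
  exact Finset.sum_congr rfl fun k _ => by ring

lemma cInt_simpleFunc (μ : ComplexMeasure (Euc d)) (s : SimpleFunc (Euc d) ℂ) :
    cInt μ s = ∑ c ∈ s.range, μ (s ⁻¹' {c}) * c := by
  simp only [cInt, ← SimpleFunc.integral_eq_integral s s.integrable_of_isFiniteMeasure,
    SimpleFunc.integral_eq, Finset.mul_sum, ← Finset.sum_sub_distrib, ← Finset.sum_add_distrib]
  refine Finset.sum_congr rfl fun c _ => ?_
  have hA := s.measurableSet_fiber c
  have hre : (μ (s ⁻¹' {c})).re = ComplexMeasure.re μ (s ⁻¹' {c}) := rfl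
  have him : (μ (s ⁻¹' {c})).im = ComplexMeasure.im μ (s ⁻¹' {c}) := rfl
  rw [← Complex.re_add_im (μ (s ⁻¹' {c})), hre, him,
    SignedMeasure.apply_eq_posPart_real_sub_negPart_real _ hA,
    SignedMeasure.apply_eq_posPart_real_sub_negPart_real _ hA]
  simp only [Complex.real_smul]
  push_cast
  ring

lemma sum_nnnorm_le_cmNorm {ι : Type*} (μ : ComplexMeasure (Euc d)) (t : Finset ι)
    {S : ι → Set (Euc d)} (hS : ∀ i, MeasurableSet (S i))
    (hdisj : (t : Set ι).PairwiseDisjoint S) :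
    ∑ i ∈ t, (‖μ (S i)‖₊ : ℝ≥0∞) ≤ cmNorm μ := by
  let e := t.equivFin
  have hdisj' : Pairwise (Function.onFun Disjoint fun j => S (e.symm j)) := fun i j hij =>
    hdisj (e.symm i).2 (e.symm j).2 fun h => hij (e.symm.injective (Subtype.ext h))
  rw [← Finset.sum_coe_sort t, ← e.symm.sum_comp]
  exact le_iSup_of_le t.card <| le_iSup_of_le (fun j => S (e.symm j)) <|
    le_iSup_of_le (fun j => hS _) <| le_iSup_of_le hdisj' le_rfl

lemma nnnorm_cInt_simpleFunc_le (μ : ComplexMeasure (Euc d)) (s : SimpleFunc (Euc d) ℂ)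
    {M : ℝ≥0} (hM : ∀ y, ‖s y‖₊ ≤ M) : (‖cInt μ s‖₊ : ℝ≥0∞) ≤ M * cmNorm μ := by
  rw [cInt_simpleFunc]
  calc (‖∑ c ∈ s.range, μ (s ⁻¹' {c}) * c‖₊ : ℝ≥0∞)
      ≤ ∑ c ∈ s.range, (‖μ (s ⁻¹' {c})‖₊ : ℝ≥0∞) * ‖c‖₊ := by
        simp only [← ENNReal.coe_mul, ← nnnorm_mul, ← ENNReal.ofNNReal_finsetSum]
        exact ENNReal.coe_le_coe.2 (nnnorm_sum_le _ _)
    _ ≤ ∑ c ∈ s.range, (‖μ (s ⁻¹' {c})‖₊ : ℝ≥0∞) * M := by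
        refine Finset.sum_le_sum fun c hc => mul_le_mul_right ?_ _
        obtain ⟨y, rfl⟩ := SimpleFunc.mem_range.1 hc
        exact ENNReal.coe_le_coe.2 (hM y)
    _ ≤ M * cmNorm μ := by
        rw [← Finset.sum_mul, mul_comm]
        exact mul_le_mul_right (sum_nnnorm_le_cmNorm μ _ s.measurableSet_fiber
          (Set.pairwiseDisjoint_fiber _ _)) _

lemma nnnorm_cInt_le (μ : ComplexMeasure (Euc d)) {F : Euc d → ℂ} (hF : Measurable F)
    {M : ℝ≥0} (hM : ∀ y, ‖F y‖₊ ≤ M) : (‖cInt μ F‖₊ : ℝ≥0∞) ≤ M * cmNorm μ := by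
  have h0 : (0 : ℂ) ∈ Metric.closedBall 0 M := by simp
  let s := SimpleFunc.approxOn F hF (Metric.closedBall 0 M) 0 h0
  have hs : ∀ n y, ‖s n y‖₊ ≤ M := fun n y => by
    simpa [← NNReal.coe_le_coe] using SimpleFunc.approxOn_mem hF h0 n y
  have hlim : Tendsto (fun n => cInt μ (s n)) atTop (𝓝 (cInt μ F)) :=
    tendsto_cInt_of_bounded μ (fun n => (s n).measurable)
      (fun n y => NNReal.coe_le_coe.2 (hs n y)) fun y => SimpleFunc.tendsto_approxOn hF h0
        (subset_closure (by simpa [← NNReal.coe_le_coe] using hM y))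
  exact le_of_tendsto ((ENNReal.continuous_coe.comp continuous_nnnorm).tendsto _ |>.comp hlim)
    (Eventually.of_forall fun n => nnnorm_cInt_simpleFunc_le μ (s n) (hs n))

lemma sum_cubeSup_mconv_le (μ : ComplexMeasure (Euc d)) {φ : Euc d → ℂ} (hφ : Continuous φ)
    (hφW : WNorm 1 φ < ∞) (K : Finset (Fin d → ℤ)) :
    ∑ k ∈ K, cubeSup (mconv μ φ) k ≤ 2 ^ d * WNorm 1 φ * cmNorm μ := by
  set g := mconv μ φ
  have hg : Continuous g := continuous_mconv μ hφ (norm_le_toReal_WNorm hφ hφW)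
  choose x hx hxmax using fun k : Fin d → ℤ =>
    isCompact_unitCube.exists_isMaxOn ⟨0, fun i => by simp⟩
      (hg.comp (continuous_id.add continuous_const)).norm.continuousOn
  choose c hc hcg using fun k => Complex.exists_norm_eq_mul_self (g (x k + zemb k))
  let F : Euc d → ℂ := fun y => ∑ k ∈ K, c k * φ (x k + zemb k - y)
  have hFint : cInt μ F = ∑ k ∈ K, (‖g (x k + zemb k)‖ : ℂ) := by
    rw [cInt_sum_mul μ K c fun k _ ν _ => Integrable.mono' (integrable_const _)
      (by fun_prop : Continuous _).aestronglyMeasurable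
      (Eventually.of_forall fun y => norm_le_toReal_WNorm hφ hφW _)]
    exact Finset.sum_congr rfl fun k _ => (hcg k).symm
  have hW : 2 ^ d * WNorm 1 φ ≠ ∞ := ENNReal.mul_ne_top (by simp) hφW.ne
  have hFbound : ∀ y, ‖F y‖₊ ≤ (2 ^ d * WNorm 1 φ).toNNReal := fun y => by
    rw [← ENNReal.coe_le_coe, ENNReal.coe_toNNReal hW]
    calc (‖F y‖₊ : ℝ≥0∞) ≤ ∑ k ∈ K, (‖φ (x k + zemb k - y)‖₊ : ℝ≥0∞) := by
          simp only [F, ← ENNReal.ofNNReal_finsetSum, ENNReal.coe_le_coe]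
          refine (nnnorm_sum_le _ _).trans (Finset.sum_le_sum fun k _ => ?_)
          simp [nnnorm_mul, ← NNReal.coe_le_coe, hc k]
      _ ≤ 2 ^ d * WNorm 1 φ := sum_nnnorm_le_two_pow_mul_WNorm hφ K hx y
  calc ∑ k ∈ K, cubeSup g k ≤ ∑ k ∈ K, (‖g (x k + zemb k)‖₊ : ℝ≥0∞) :=
        Finset.sum_le_sum fun k _ => cubeSup_le fun z hz => by exact_mod_cast hxmax k hz
    _ = ‖cInt μ F‖₊ := by
        rw [hFint, ← ENNReal.ofNNReal_finsetSum, ENNReal.coe_inj, ← NNReal.coe_inj]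
        push_cast
        rw [← Complex.ofReal_sum, Complex.norm_real, Real.norm_of_nonneg
          (Finset.sum_nonneg fun k _ => norm_nonneg _)]
    _ ≤ 2 ^ d * WNorm 1 φ * cmNorm μ := by
        have := nnnorm_cInt_le μ (by fun_prop : Continuous F).measurable hFbound
        rwa [ENNReal.coe_toNNReal hW] at this

open MeasureTheory ENNReal in
/-- Lemma 4.1: for `φ ∈ W₀¹` and a finite complex Borel measure `μ`,
the convolution `φ ∗ μ` is continuous and `‖φ∗μ‖_{W¹} ≤ 2^d ‖φ‖_{W¹} ‖μ‖`. -/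
theorem conv_continuous_and_W1_bound
    (d : ℕ) (φ : Euc d → ℂ) (hφc : Continuous φ) (hφW : WNorm 1 φ < ∞)
    (μ : ComplexMeasure (Euc d)) :
    Continuous (mconv μ φ) ∧
      WNorm 1 (mconv μ φ) ≤ (2 : ℝ≥0∞) ^ d * WNorm 1 φ * cmNorm μ := by
  refine ⟨continuous_mconv μ hφc (norm_le_toReal_WNorm hφc hφW), ?_⟩
  rw [WNorm_one_eq_tsum, ENNReal.tsum_eq_iSup_sum]
  exact iSup_le (sum_cubeSup_mconv_le μ hφc hφW)
end
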